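/- If k₁ + k₂ + k₃ = 0, then the perpendicular bracket represents the anti-cyclic pairing of Lie brackets: B([ξ₁,ξ₂]^⊥, ξ₃) = −B([ξ₁,ξ₂], ξ₃) + B([ξ₃,ξ₁], ξ₂) + B([ξ₂,ξ₃], ξ₁). -/

import Mathlib

namespace Stmt14

variable {V : Type*} [AddCommGroup V] [Module ℝ V]

/-- The momentum-space Lie bracket of modes. -/
def lieMode (B : LinearMap.BilinForm ℝ V) (p q : V × V) : V × V :=
  (B p.1 q.2 • q.1 - B q.1 p.2 • p.1, p.2 + q.2)

/-- The perpendicular bracket of modes: polarization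
`[ξ₁,ξ₂]^⊥ = (ξ₁·ξ₂)(k₁−k₂) + (ξ₁·k₁)ξ₂ − (ξ₂·k₂)ξ₁`, momentum `k₁+k₂`. -/
def perpMode (B : LinearMap.BilinForm ℝ V) (p q : V × V) : V × V :=
  (B p.1 q.1 • (p.2 - q.2) + B p.1 p.2 • q.1 - B q.1 q.2 • p.1, p.2 + q.2)

lemma lieMode_fst_apply (B : LinearMap.BilinForm ℝ V) (p q : V × V) (z : V) :
    B (lieMode B p q).1 z = B p.1 q.2 * B q.1 z - B q.1 p.2 * B p.1 z := by
  simp [lieMode]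

lemma perpMode_fst_apply (B : LinearMap.BilinForm ℝ V) (p q : V × V) (z : V) :
    B (perpMode B p q).1 z
      = B p.1 q.1 * (B p.2 z - B q.2 z) + B p.1 p.2 * B q.1 z - B q.1 q.2 * B p.1 z := by
  simp [perpMode]

lemma apply_eq_neg_add_of_add_add_eq_zero (B : LinearMap.BilinForm ℝ V) {k₁ k₂ k₃ : V}
    (h : k₁ + k₂ + k₃ = 0) (x : V) : B x k₃ = -(B x k₁ + B x k₂) := by
  rw [eq_neg_of_add_eq_zero_right h, map_neg, map_add]

/-- If `k₁ + k₂ + k₃ = 0`, then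
`B([ξ₁,ξ₂]^⊥, ξ₃) = −B([ξ₁,ξ₂],ξ₃) + B([ξ₃,ξ₁],ξ₂) + B([ξ₂,ξ₃],ξ₁)`. -/
theorem perp_anticyclic (B : LinearMap.BilinForm ℝ V) (hB : B.IsSymm)
    (ξ₁ k₁ ξ₂ k₂ ξ₃ k₃ : V) (h : k₁ + k₂ + k₃ = 0) :
    B (perpMode B (ξ₁, k₁) (ξ₂, k₂)).1 ξ₃
      = -B (lieMode B (ξ₁, k₁) (ξ₂, k₂)).1 ξ₃
        + B (lieMode B (ξ₃, k₃) (ξ₁, k₁)).1 ξ₂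
        + B (lieMode B (ξ₂, k₂) (ξ₃, k₃)).1 ξ₁ := by
  simp only [perpMode_fst_apply, lieMode_fst_apply,
    apply_eq_neg_add_of_add_add_eq_zero B h]
  rw [hB.eq k₁ ξ₃, hB.eq k₂ ξ₃, hB.eq ξ₂ ξ₁, hB.eq ξ₃ ξ₁, hB.eq ξ₃ ξ₂]
  ring

end Stmt14
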